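/- arXiv:1005.1018 — 12 statements merged into one kernel-verified Lean document; each statement's English description precedes it below -/
import Mathlib

section
/- Let Q be an involutive quantale that is Cauchy-bilateral. Then for every Q-category (A, c) and every left adjoint presheaf (φ, ψ) on (A, c), the symmetrised presheaf φ_s (defined by φ_s a = φ a ⊓ (ψ a)ᵒ) is a symmetric left adjoint, i.e. 1 ≤ ⨆ a, (φ_s a)ᵒ * (φ_s a). (This is the implication (5) ⇒ (2) of the paper's main Theorem, stated for a one-object quantaloid, i.e. a quantale.) -/
/-- (5) ⇒ (2) of the main Theorem, for a quantale: if the involutive quantale `Q` is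
Cauchy-bilateral, then for every `Q`-category `(A, c)` and every left adjoint presheaf
`(φ, ψ)` on it, the symmetrised presheaf `φ_s a = φ a ⊓ (ψ a)ᵒ` is a symmetric left
adjoint, i.e. `1 ≤ ⨆ a, (φ_s a)ᵒ * (φ_s a)`. -/
theorem cauchyBilateral_implies_symmetrisation_leftAdjoint
    {Q : Type} [CompleteLattice Q] [Monoid Q] [IsQuantale Q]
    (o : Q → Q)
    (o_mono : ∀ a b : Q, a ≤ b → o a ≤ o b)
    (o_mul : ∀ a b : Q, o (a * b) = o b * o a)
    (o_o : ∀ a : Q, o (o a) = a)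
    -- Cauchy-bilaterality of Q
    (hCB : ∀ (ι : Type) (f g : ι → Q),
      (∀ j k : ι, f k * g j * f j ≤ f k) →
      (∀ j k : ι, g j * f j * g k ≤ g k) →
      ((1 : Q) ≤ ⨆ i, g i * f i) →
      (1 : Q) ≤ ⨆ i, (g i ⊓ o (f i)) * (o (g i) ⊓ f i))
    -- a Q-category (A, c)
    (A : Type) (c : A → A → Q)
    (c_refl : ∀ a : A, (1 : Q) ≤ c a a)
    (c_comp : ∀ a b b' : A, c a b * c b b' ≤ c a b')
    -- a left adjoint presheaf (φ, ψ) on (A, c)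
    (φ ψ : A → Q)
    (act₁ : ∀ a b : A, c a b * φ b ≤ φ a)
    (act₂ : ∀ a b : A, ψ b * c b a ≤ ψ a)
    (counit : ∀ a b : A, φ a * ψ b ≤ c a b)
    (unit : (1 : Q) ≤ ⨆ a, ψ a * φ a) :
    (1 : Q) ≤ ⨆ a, o (φ a ⊓ o (ψ a)) * (φ a ⊓ o (ψ a)) := by
  have o_inf : ∀ x y : Q, o (x ⊓ y) = o x ⊓ o y := by
    intro x y
    refine le_antisymm (le_inf (o_mono _ _ inf_le_left) (o_mono _ _ inf_le_right)) ?_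
    have h : o (o x ⊓ o y) ≤ x ⊓ y := le_inf
      (le_trans (o_mono _ _ inf_le_left) (o_o x).le)
      (le_trans (o_mono _ _ inf_le_right) (o_o y).le)
    have := o_mono _ _ h
    rwa [o_o] at this
  have key := hCB A φ ψ
    (fun j k => le_trans (mul_le_mul_left (counit k j) _) (act₁ k j))
    (fun j k => by
      rw [mul_assoc]; exact le_trans (mul_le_mul_right (counit j k) _) (act₂ k j))
    unit
  refine le_trans key (iSup_mono fun a => ?_)
  rw [o_inf, o_o, inf_comm (ψ a), inf_comm (o (ψ a))]
end

section
/- Let Q be an involutive quantale. Suppose that for every Q-category (A, c) and every left adjoint presheaf (φ, ψ) on (A, c), the symmetrised presheaf φ_s (defined by φ_s a = φ a ⊓ (ψ a)ᵒ) satisfies 1 ≤ ⨆ a, (φ_s a)ᵒ * (φ_s a). Then Q is Cauchy-bilateral. (This is the implication (2) ⇒ (5) of the paper's main Theorem, stated for quantales; the proof uses the Q-category on the index set I with hom c(j, i) = f j * g j ⊔ δ_{ji} and the presheaf φ i = f i with right adjoint ψ i = g i.) -/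
open IsQuantale


theorem bot_mul' {Q : Type} [CompleteLattice Q] [Monoid Q] [IsQuantale Q] (x : Q) :
    (⊥ : Q) * x = ⊥ := by
  have : (⊥ : Q) = sSup ∅ := by simp
  rw [this, IsQuantale.sSup_mul_distrib]; simp

theorem mul_bot' {Q : Type} [CompleteLattice Q] [Monoid Q] [IsQuantale Q] (x : Q) :
    x * (⊥ : Q) = ⊥ := by
  have : (⊥ : Q) = sSup ∅ := by simp
  rw [this, IsQuantale.mul_sSup_distrib]; simp

/-- (2) ⇒ (5) of the main Theorem, for a quantale: if for every `Q`-category `(A, c)`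
and every left adjoint presheaf `(φ, ψ)` on it the symmetrised presheaf
`φ_s a = φ a ⊓ (ψ a)ᵒ` is a symmetric left adjoint, then `Q` is Cauchy-bilateral. -/
theorem symmetrisation_leftAdjoint_implies_cauchyBilateral
    {Q : Type} [CompleteLattice Q] [Monoid Q] [IsQuantale Q]
    (o : Q → Q)
    (o_mono : ∀ a b : Q, a ≤ b → o a ≤ o b)
    (o_mul : ∀ a b : Q, o (a * b) = o b * o a)
    (o_o : ∀ a : Q, o (o a) = a)
    -- hypothesis: symmetrisations of left adjoint presheaves are symmetric left adjoints
    (H : ∀ (A : Type) (c : A → A → Q),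
      (∀ a : A, (1 : Q) ≤ c a a) →
      (∀ a b b' : A, c a b * c b b' ≤ c a b') →
      ∀ (φ ψ : A → Q),
        (∀ a b : A, c a b * φ b ≤ φ a) →
        (∀ a b : A, ψ b * c b a ≤ ψ a) →
        (∀ a b : A, φ a * ψ b ≤ c a b) →
        ((1 : Q) ≤ ⨆ a, ψ a * φ a) →
        (1 : Q) ≤ ⨆ a, o (φ a ⊓ o (ψ a)) * (φ a ⊓ o (ψ a))) :
    -- conclusion: Q is Cauchy-bilateral
    ∀ (ι : Type) (f g : ι → Q),
      (∀ j k : ι, f k * g j * f j ≤ f k) →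
      (∀ j k : ι, g j * f j * g k ≤ g k) →
      ((1 : Q) ≤ ⨆ i, g i * f i) →
      (1 : Q) ≤ ⨆ i, (g i ⊓ o (f i)) * (o (g i) ⊓ f i) := by
  intro ι f g hf hg hunit
  classical
  -- inf preservation of o
  have o_inf : ∀ a b : Q, o (a ⊓ b) = o a ⊓ o b := by
    intro a b
    apply le_antisymm
    · exact le_inf (o_mono _ _ inf_le_left) (o_mono _ _ inf_le_right)
    · have : o (o a ⊓ o b) ≤ a ⊓ b := by
        refine le_inf ?_ ?_
        · have := o_mono _ _ (inf_le_left : o a ⊓ o b ≤ o a); rwa [o_o] at this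
        · have := o_mono _ _ (inf_le_right : o a ⊓ o b ≤ o b); rwa [o_o] at this
      have := o_mono _ _ this
      rwa [o_o] at this
  set c : ι → ι → Q := fun a b => f a * g b ⊔ (if a = b then (1 : Q) else ⊥) with hc
  have refl : ∀ a, (1 : Q) ≤ c a a := by
    intro a; simp [hc]
  have trans : ∀ a b b', c a b * c b b' ≤ c a b' := by
    intro a b b'
    simp only [hc, Quantale.sup_mul_distrib, Quantale.mul_sup_distrib, sup_le_iff]
    refine ⟨⟨?_, ?_⟩, ?_, ?_⟩
    · calc f a * g b * (f b * g b')
          = f a * (g b * f b * g b') := by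
            simp [mul_assoc]
        _ ≤ f a * g b' := by
            exact mul_le_mul_right (hg b b') _
        _ ≤ _ := le_sup_left
    · by_cases hbe : a = b
      · subst hbe
        simpa using (le_sup_left : f a * g b' ≤ _)
      · simp [hbe, bot_mul']
    · by_cases hbe : b = b'
      · subst hbe
        simpa using (le_sup_left : f a * g b ≤ _)
      · simp [hbe, mul_bot']
    · by_cases hbe : a = b
      · subst hbe
        by_cases h2 : a = b'
        · subst h2; simp
        · simp [h2, mul_bot']
      · simp [hbe, bot_mul']
  have act1 : ∀ a b, c a b * f b ≤ f a := by
    intro a b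
    simp only [hc, Quantale.sup_mul_distrib, sup_le_iff]
    constructor
    · exact hf b a
    · by_cases hbe : a = b
      · subst hbe; simp
      · simp [hbe, bot_mul', mul_bot']
  have act2 : ∀ a b, g b * c b a ≤ g a := by
    intro a b
    simp only [hc, Quantale.mul_sup_distrib, sup_le_iff]
    constructor
    · rw [← mul_assoc]; exact hg b a
    · by_cases hbe : b = a
      · subst hbe; simp
      · simp [hbe, bot_mul', mul_bot']
  have counit : ∀ a b, f a * g b ≤ c a b := fun a b => le_sup_left
  have key := H ι c refl trans f g act1 act2 counit hunit
  refine key.trans (iSup_mono fun a => ?_)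
  have h1 : o (f a ⊓ o (g a)) = g a ⊓ o (f a) := by
    rw [o_inf, o_o, inf_comm]
  have h2 : f a ⊓ o (g a) = o (g a) ⊓ f a := inf_comm _ _
  rw [h1, h2]
end

section
/- Let Q be a Cauchy-bilateral involutive quantale and let (A, c) be a symmetric Q-category. Then every left adjoint presheaf on (A, c) is symmetric: if (φ, ψ) is a left adjoint presheaf on (A, c), then ψ a = (φ a)ᵒ for all a. (This is the key step of the Corollary asserting that the Cauchy completion of a symmetric Q-category is symmetric, stated for quantales.) -/
private theorem ladj_aux
    {Q : Type} [CompleteLattice Q] [Monoid Q] [IsQuantale Q]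
    (o : Q → Q)
    (o_mono : ∀ a b : Q, a ≤ b → o a ≤ o b)
    (o_mul : ∀ a b : Q, o (a * b) = o b * o a)
    (hCB : ∀ (ι : Type) (f g : ι → Q),
      (∀ j k : ι, f k * g j * f j ≤ f k) →
      (∀ j k : ι, g j * f j * g k ≤ g k) →
      ((1 : Q) ≤ ⨆ i, g i * f i) →
      (1 : Q) ≤ ⨆ i, (g i ⊓ o (f i)) * (o (g i) ⊓ f i))
    (A : Type) (c : A → A → Q)
    (c_symm : ∀ a b : A, c a b = o (c b a))
    (φ ψ : A → Q)
    (act₁ : ∀ a b : A, c a b * φ b ≤ φ a)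
    (act₂ : ∀ a b : A, ψ b * c b a ≤ ψ a)
    (counit : ∀ a b : A, φ a * ψ b ≤ c a b)
    (unit : (1 : Q) ≤ ⨆ a, ψ a * φ a) :
    ∀ a : A, ψ a ≤ o (φ a) := by
  intro a
  have h1 : ∀ j k : A, φ k * ψ j * φ j ≤ φ k := fun j k =>
    le_trans (mul_le_mul_left (counit k j) (φ j)) (act₁ k j)
  have h2 : ∀ j k : A, ψ j * φ j * ψ k ≤ ψ j * c j k := fun j k => by
    rw [mul_assoc]; exact mul_le_mul_right (counit j k) (ψ j)
  have key := hCB A φ ψ h1 (fun j k => le_trans (h2 j k) (act₂ k j)) unit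
  calc ψ a = 1 * ψ a := (one_mul _).symm
    _ ≤ (⨆ i, (ψ i ⊓ o (φ i)) * (o (ψ i) ⊓ φ i)) * ψ a :=
        mul_le_mul_left key (ψ a)
    _ = ⨆ i, (ψ i ⊓ o (φ i)) * (o (ψ i) ⊓ φ i) * ψ a := Quantale.iSup_mul_distrib
    _ ≤ o (φ a) := by
        apply iSup_le
        intro i
        calc (ψ i ⊓ o (φ i)) * (o (ψ i) ⊓ φ i) * ψ a
            ≤ o (φ i) * (φ i * ψ a) := by
              rw [mul_assoc]
              exact mul_le_mul' inf_le_right (mul_le_mul_left inf_le_right _)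
          _ ≤ o (φ i) * c i a := mul_le_mul_right (counit i a) _
          _ = o (c a i * φ i) := by rw [c_symm i a, ← o_mul]
          _ ≤ o (φ a) := o_mono _ _ (act₁ a i)



/-- If `Q` is a Cauchy-bilateral involutive quantale and `(A, c)` is a symmetric
`Q`-category, then every left adjoint presheaf `(φ, ψ)` on `(A, c)` is symmetric:
`ψ a = (φ a)ᵒ` for all `a`. -/
theorem leftAdjoint_presheaf_symmetric_of_cauchyBilateral
    {Q : Type} [CompleteLattice Q] [Monoid Q] [IsQuantale Q]
    (o : Q → Q)
    (o_mono : ∀ a b : Q, a ≤ b → o a ≤ o b)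
    (o_mul : ∀ a b : Q, o (a * b) = o b * o a)
    (o_o : ∀ a : Q, o (o a) = a)
    -- Cauchy-bilaterality of Q
    (hCB : ∀ (ι : Type) (f g : ι → Q),
      (∀ j k : ι, f k * g j * f j ≤ f k) →
      (∀ j k : ι, g j * f j * g k ≤ g k) →
      ((1 : Q) ≤ ⨆ i, g i * f i) →
      (1 : Q) ≤ ⨆ i, (g i ⊓ o (f i)) * (o (g i) ⊓ f i))
    -- a symmetric Q-category (A, c)
    (A : Type) (c : A → A → Q)
    (c_refl : ∀ a : A, (1 : Q) ≤ c a a)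
    (c_comp : ∀ a b b' : A, c a b * c b b' ≤ c a b')
    (c_symm : ∀ a b : A, c a b = o (c b a))
    -- a left adjoint presheaf (φ, ψ) on (A, c)
    (φ ψ : A → Q)
    (act₁ : ∀ a b : A, c a b * φ b ≤ φ a)
    (act₂ : ∀ a b : A, ψ b * c b a ≤ ψ a)
    (counit : ∀ a b : A, φ a * ψ b ≤ c a b)
    (unit : (1 : Q) ≤ ⨆ a, ψ a * φ a) :
    ∀ a : A, ψ a = o (φ a) := by

  intro a
  have one_o : o 1 = 1 := by
    have h : ∀ x : Q, o x = o 1 * o x := fun x => by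
      rw [← o_mul]; simp
    have := h (o 1); rw [o_o, mul_one] at this; exact this.symm
  refine le_antisymm (ladj_aux o o_mono o_mul hCB A c c_symm φ ψ act₁ act₂ counit unit a) ?_
  -- dual presheaf (o ∘ ψ, o ∘ φ)
  have act₁' : ∀ a b : A, c a b * o (ψ b) ≤ o (ψ a) := fun a b => by
    rw [c_symm a b, ← o_mul]; exact o_mono _ _ (act₂ a b)
  have act₂' : ∀ a b : A, o (φ b) * c b a ≤ o (φ a) := fun a b => by
    rw [c_symm b a, ← o_mul]; exact o_mono _ _ (act₁ a b)
  have counit' : ∀ a b : A, o (ψ a) * o (φ b) ≤ c a b := fun a b => by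
    rw [← o_mul, c_symm a b]; exact o_mono _ _ (counit b a)
  have unit' : (1 : Q) ≤ ⨆ a, o (φ a) * o (ψ a) := by
    have h1 : (⨆ a, ψ a * φ a) ≤ o (⨆ a, o (φ a) * o (ψ a)) := by
      apply iSup_le
      intro i
      have : o (ψ i * φ i) ≤ ⨆ a, o (φ a) * o (ψ a) := by
        rw [o_mul]; exact le_iSup (fun a => o (φ a) * o (ψ a)) i
      have := o_mono _ _ this
      rwa [o_o] at this
    calc (1 : Q) = o 1 := one_o.symm
      _ ≤ o (⨆ a, ψ a * φ a) := o_mono _ _ unit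
      _ ≤ o (o (⨆ a, o (φ a) * o (ψ a))) := o_mono _ _ h1
      _ = _ := o_o _
  have := ladj_aux o o_mono o_mul hCB A c c_symm (fun x => o (ψ x)) (fun x => o (φ x))
    act₁' act₂' counit' unit' a
  rwa [o_o] at this
end

section
/- Let Q be an involutive quantale, (A, c) a Q-category, and (φ, ψ) a left adjoint presheaf on (A, c). Define φ_s a = φ a ⊓ (ψ a)ᵒ and c_s a b = c a b ⊓ (c b a)ᵒ. Then φ_s a * (φ_s b)ᵒ ≤ c_s a b for all a, b; that is, the counit inequality for the candidate adjunction φ_s ⊣ (φ_s)ᵒ always holds. (Presheaf instance, over a quantale, of the paper's Lemma on symmetrisation of left adjoint distributors.) -/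
/-- Presheaf instance of the Lemma on symmetrisation of left adjoint distributors:
the counit inequality `φ_s a * (φ_s b)ᵒ ≤ c_s a b` always holds, where
`φ_s a = φ a ⊓ (ψ a)ᵒ` and `c_s a b = c a b ⊓ (c b a)ᵒ`. -/
theorem symmetrised_presheaf_counit
    {Q : Type} [CompleteLattice Q] [Monoid Q] [IsQuantale Q]
    (o : Q → Q)
    (o_mono : ∀ a b : Q, a ≤ b → o a ≤ o b)
    (o_mul : ∀ a b : Q, o (a * b) = o b * o a)
    (o_o : ∀ a : Q, o (o a) = a)
    -- a Q-category (A, c)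
    (A : Type) (c : A → A → Q)
    (c_refl : ∀ a : A, (1 : Q) ≤ c a a)
    (c_comp : ∀ a b b' : A, c a b * c b b' ≤ c a b')
    -- a left adjoint presheaf (φ, ψ) on (A, c)
    (φ ψ : A → Q)
    (act₁ : ∀ a b : A, c a b * φ b ≤ φ a)
    (act₂ : ∀ a b : A, ψ b * c b a ≤ ψ a)
    (counit : ∀ a b : A, φ a * ψ b ≤ c a b)
    (unit : (1 : Q) ≤ ⨆ a, ψ a * φ a) :
    ∀ a b : A, (φ a ⊓ o (ψ a)) * o (φ b ⊓ o (ψ b)) ≤ c a b ⊓ o (c b a) := by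
  intro a b
  refine le_inf ?_ ?_
  · calc (φ a ⊓ o (ψ a)) * o (φ b ⊓ o (ψ b))
        ≤ φ a * ψ b := by
          apply mul_le_mul' inf_le_left
          calc o (φ b ⊓ o (ψ b)) ≤ o (o (ψ b)) := o_mono _ _ inf_le_right
            _ = ψ b := o_o _
      _ ≤ c a b := counit a b
  · calc (φ a ⊓ o (ψ a)) * o (φ b ⊓ o (ψ b))
        ≤ o (ψ a) * o (φ b) := mul_le_mul' inf_le_right (o_mono _ _ inf_le_left)
      _ = o (φ b * ψ a) := (o_mul _ _).symm
      _ ≤ o (c b a) := o_mono _ _ (counit b a)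
end

section
/- Let Q be an involutive quantale, (A, c) a Q-category, and (φ, ψ) a left adjoint presheaf on (A, c). Define φ_s a = φ a ⊓ (ψ a)ᵒ. If moreover 1 ≤ ⨆ a, (φ_s a)ᵒ * (φ_s a) (so that φ_s is a symmetric left adjoint), then φ can be recovered from φ_s: φ a = ⨆ b, c a b * φ_s b for all a. (Presheaf instance, over a quantale, of the second part of the paper's Lemma on symmetrisation of left adjoint distributors.) -/
/-- Presheaf instance of the second part of the Lemma on symmetrisation of left adjoint
distributors: if `φ_s a = φ a ⊓ (ψ a)ᵒ` is a symmetric left adjoint, then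
`φ a = ⨆ b, c a b * φ_s b` for all `a`. -/
theorem presheaf_recovered_from_symmetrisation
    {Q : Type} [CompleteLattice Q] [Monoid Q] [IsQuantale Q]
    (o : Q → Q)
    (o_mono : ∀ a b : Q, a ≤ b → o a ≤ o b)
    (o_mul : ∀ a b : Q, o (a * b) = o b * o a)
    (o_o : ∀ a : Q, o (o a) = a)
    -- a Q-category (A, c)
    (A : Type) (c : A → A → Q)
    (c_refl : ∀ a : A, (1 : Q) ≤ c a a)
    (c_comp : ∀ a b b' : A, c a b * c b b' ≤ c a b')
    -- a left adjoint presheaf (φ, ψ) on (A, c)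
    (φ ψ : A → Q)
    (act₁ : ∀ a b : A, c a b * φ b ≤ φ a)
    (act₂ : ∀ a b : A, ψ b * c b a ≤ ψ a)
    (counit : ∀ a b : A, φ a * ψ b ≤ c a b)
    (unit : (1 : Q) ≤ ⨆ a, ψ a * φ a)
    -- the symmetrised presheaf is a symmetric left adjoint
    (hsym : (1 : Q) ≤ ⨆ a, o (φ a ⊓ o (ψ a)) * (φ a ⊓ o (ψ a))) :
    ∀ a : A, φ a = ⨆ b, c a b * (φ b ⊓ o (ψ b)) := by
  intro a
  apply le_antisymm
  · calc φ a = φ a * 1 := (mul_one _).symm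
      _ ≤ φ a * ⨆ b, o (φ b ⊓ o (ψ b)) * (φ b ⊓ o (ψ b)) := mul_le_mul_right hsym _
      _ = ⨆ b, φ a * (o (φ b ⊓ o (ψ b)) * (φ b ⊓ o (ψ b))) := Quantale.mul_iSup_distrib
      _ ≤ ⨆ b, c a b * (φ b ⊓ o (ψ b)) := by
          apply iSup_mono
          intro b
          rw [← mul_assoc]
          refine mul_le_mul' ?_ le_rfl
          refine le_trans (mul_le_mul_right ?_ _) (counit a b)
          exact le_trans (o_mono _ _ inf_le_right) (le_of_eq (o_o _))
  · exact iSup_le fun b => le_trans (mul_le_mul_right inf_le_left _) (act₁ a b)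
end

section
/- Let Q be an involutive quantale and (A, c) a Q-category, with symmetrisation c_s a b = c a b ⊓ (c b a)ᵒ. For a symmetric left adjoint presheaf θ on (A, c_s) define Lθ a = ⨆ b, c a b * θ b and (Lθ)* a = ⨆ b, (θ b)ᵒ * c b a. Then for any two symmetric left adjoint presheaves φ, ψ on (A, c_s): ⨆ a, (ψ a)ᵒ * φ a = (⨆ a, (Lψ)* a * Lφ a) ⊓ (⨆ a, (Lφ)* a * Lψ a)ᵒ. (This is the full-faithfulness computation for the comparison functor L : (A_s)_sc → (A_cc)_s, in the one-object-quantaloid case.) -/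
open IsQuantale

/-- Full-faithfulness of the comparison functor `L : (A_s)_sc → (A_cc)_s`, in the
one-object-quantaloid case: for symmetric left adjoint presheaves `φ, ψ` on the
symmetrisation `(A, c_s)` of a `Q`-category `(A, c)`, with `Lθ a = ⨆ b, c a b * θ b`
and `(Lθ)* a = ⨆ b, (θ b)ᵒ * c b a`, one has
`⨆ a, (ψ a)ᵒ * φ a = (⨆ a, (Lψ)* a * Lφ a) ⊓ (⨆ a, (Lφ)* a * Lψ a)ᵒ`. -/
theorem comparison_functor_fully_faithful
    {Q : Type} [CompleteLattice Q] [Monoid Q] [IsQuantale Q]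
    (o : Q → Q)
    (o_mono : ∀ a b : Q, a ≤ b → o a ≤ o b)
    (o_mul : ∀ a b : Q, o (a * b) = o b * o a)
    (o_o : ∀ a : Q, o (o a) = a)
    -- a Q-category (A, c)
    (A : Type) (c : A → A → Q)
    (c_refl : ∀ a : A, (1 : Q) ≤ c a a)
    (c_comp : ∀ a b b' : A, c a b * c b b' ≤ c a b')
    -- φ is a symmetric left adjoint presheaf on (A, c_s), c_s a b = c a b ⊓ (c b a)ᵒ
    (φ : A → Q)
    (φ_act : ∀ a b : A, (c a b ⊓ o (c b a)) * φ b ≤ φ a)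
    (φ_counit : ∀ a b : A, φ a * o (φ b) ≤ c a b ⊓ o (c b a))
    (φ_unit : (1 : Q) ≤ ⨆ a, o (φ a) * φ a)
    -- ψ is a symmetric left adjoint presheaf on (A, c_s)
    (ψ : A → Q)
    (ψ_act : ∀ a b : A, (c a b ⊓ o (c b a)) * ψ b ≤ ψ a)
    (ψ_counit : ∀ a b : A, ψ a * o (ψ b) ≤ c a b ⊓ o (c b a))
    (ψ_unit : (1 : Q) ≤ ⨆ a, o (ψ a) * ψ a) :
    (⨆ a, o (ψ a) * φ a) =
      (⨆ a, (⨆ b, o (ψ b) * c b a) * (⨆ b, c a b * φ b)) ⊓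
        o (⨆ a, (⨆ b, o (φ b) * c b a) * (⨆ b, c a b * ψ b)) := by
  -- `o 1 = 1`
  have o_one : o (1 : Q) = 1 := by
    have h : ∀ a : Q, o 1 * a = a := fun a => by
      conv_lhs => rw [← o_o a, ← o_mul, mul_one, o_o]
    simpa using h 1
  set T1 := ⨆ a, (⨆ b, o (ψ b) * c b a) * (⨆ b, c a b * φ b) with hT1
  set T2 := ⨆ a, (⨆ b, o (φ b) * c b a) * (⨆ b, c a b * ψ b) with hT2
  -- generic bound: θ₁ a * T(θ₁,θ₂) * o (θ₂ a') ≤ c a a'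
  have key : ∀ (θ₁ θ₂ : A → Q),
      (∀ a b : A, θ₁ a * o (θ₁ b) ≤ c a b ⊓ o (c b a)) →
      (∀ a b : A, θ₂ a * o (θ₂ b) ≤ c a b ⊓ o (c b a)) →
      ∀ a a' : A,
        θ₁ a * (⨆ x, (⨆ b, o (θ₁ b) * c b x) * (⨆ b, c x b * θ₂ b)) * o (θ₂ a')
          ≤ c a a' := by
    intro θ₁ θ₂ h1 h2 a a'
    simp only [Quantale.mul_iSup_distrib, Quantale.iSup_mul_distrib, iSup_le_iff]
    intro x b' b
    have hb : (θ₁ a * o (θ₁ b)) * c b x * c x b' * (θ₂ b' * o (θ₂ a')) ≤ c a a' := by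
      calc (θ₁ a * o (θ₁ b)) * c b x * c x b' * (θ₂ b' * o (θ₂ a'))
      _ ≤ c a b * c b x * c x b' * c b' a' := by
          refine mul_le_mul' (mul_le_mul' (mul_le_mul'
            ((h1 a b).trans inf_le_left) le_rfl) le_rfl) ((h2 b' a').trans inf_le_left)
      _ ≤ c a x * c x b' * c b' a' :=
          mul_le_mul' (mul_le_mul' (c_comp a b x) le_rfl) le_rfl
      _ ≤ c a b' * c b' a' := mul_le_mul' (c_comp a x b') le_rfl
      _ ≤ c a a' := c_comp a b' a'
    refine le_trans (le_of_eq ?_) hb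
    simp only [mul_assoc]
  -- generic lower bound: o (θ₁ a) * θ₂ a ≤ T(θ₁,θ₂)
  have low : ∀ (θ₁ θ₂ : A → Q) (a : A),
      o (θ₁ a) * θ₂ a ≤ ⨆ x, (⨆ b, o (θ₁ b) * c b x) * (⨆ b, c x b * θ₂ b) := by
    intro θ₁ θ₂ a
    refine le_trans ?_ (le_iSup _ a)
    refine le_trans ?_ (mul_le_mul' (le_iSup (fun b => o (θ₁ b) * c b a) a)
      (le_iSup (fun b => c a b * θ₂ b) a))
    calc o (θ₁ a) * θ₂ a = o (θ₁ a) * 1 * (1 * θ₂ a) := by simp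
      _ ≤ o (θ₁ a) * c a a * (c a a * θ₂ a) :=
          mul_le_mul' (mul_le_mul' le_rfl (c_refl a)) (mul_le_mul' (c_refl a) le_rfl)
  apply le_antisymm
  · refine le_inf (iSup_le fun a => low ψ φ a) (iSup_le fun a => ?_)
    have : o (ψ a) * φ a = o (o (φ a) * ψ a) := by rw [o_mul, o_o]
    rw [this]
    exact o_mono _ _ (low φ ψ a)
  · -- hard direction
    have step : ∀ a a' : A, ψ a * (T1 ⊓ o T2) * o (φ a') ≤ c a a' ⊓ o (c a' a) := by
      intro a a'
      refine le_inf ?_ ?_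
      · calc ψ a * (T1 ⊓ o T2) * o (φ a') ≤ ψ a * T1 * o (φ a') :=
              mul_le_mul' (mul_le_mul' le_rfl inf_le_left) le_rfl
          _ ≤ c a a' := key ψ φ ψ_counit φ_counit a a'
      · have : ψ a * (T1 ⊓ o T2) * o (φ a') ≤ ψ a * o T2 * o (φ a') :=
          mul_le_mul' (mul_le_mul' le_rfl inf_le_right) le_rfl
        refine this.trans ?_
        have e : ψ a * o T2 * o (φ a') = o (φ a' * T2 * o (ψ a)) := by
          rw [o_mul, o_mul, o_o, mul_assoc]
        rw [e]
        exact o_mono _ _ (key φ ψ φ_counit ψ_counit a' a)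
    calc T1 ⊓ o T2 = 1 * (T1 ⊓ o T2) * 1 := by simp
      _ ≤ (⨆ a, o (ψ a) * ψ a) * (T1 ⊓ o T2) * (⨆ a, o (φ a) * φ a) :=
          mul_le_mul' (mul_le_mul' ψ_unit le_rfl) φ_unit
      _ ≤ ⨆ a, o (ψ a) * φ a := by
          rw [Quantale.iSup_mul_distrib, Quantale.iSup_mul_distrib]
          refine iSup_le fun a => ?_
          rw [Quantale.mul_iSup_distrib]
          refine iSup_le fun a' => ?_
          calc o (ψ a) * ψ a * (T1 ⊓ o T2) * (o (φ a') * φ a')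
              = o (ψ a) * ((ψ a * (T1 ⊓ o T2) * o (φ a')) * φ a') := by
                simp only [mul_assoc]
            _ ≤ o (ψ a) * ((c a a' ⊓ o (c a' a)) * φ a') :=
                mul_le_mul' le_rfl (mul_le_mul' (step a a') le_rfl)
            _ ≤ o (ψ a) * φ a := mul_le_mul' le_rfl (φ_act a a')
            _ ≤ ⨆ a, o (ψ a) * φ a := le_iSup (fun a => o (ψ a) * φ a) a
end

section
/- Let Q be an involutive quantale and (A, c) a Q-category, with symmetrisation c_s a b = c a b ⊓ (c b a)ᵒ. For a symmetric left adjoint presheaf θ on (A, c_s) define Lθ a = ⨆ b, c a b * θ b and (Lθ)* a = ⨆ b, (θ b)ᵒ * c b a. Then θ is recovered from Lθ by the formula θ a = (Lθ) a ⊓ ((Lθ)* a)ᵒ for all a; hence the comparison map L is injective on symmetric left adjoint presheaves. (One-object-quantaloid instance of equation (a3.4) in the paper.) -/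
/-- One-object-quantaloid instance of equation (a3.4): a symmetric left adjoint presheaf
`θ` on the symmetrisation `(A, c_s)` of a `Q`-category `(A, c)` is recovered from its
image `Lθ a = ⨆ b, c a b * θ b`, `(Lθ)* a = ⨆ b, (θ b)ᵒ * c b a` by
`θ a = (Lθ) a ⊓ ((Lθ)* a)ᵒ`; hence the comparison map `L` is injective. -/
theorem comparison_functor_injective_formula
    {Q : Type} [CompleteLattice Q] [Monoid Q] [IsQuantale Q]
    (o : Q → Q)
    (o_mono : ∀ a b : Q, a ≤ b → o a ≤ o b)
    (o_mul : ∀ a b : Q, o (a * b) = o b * o a)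
    (o_o : ∀ a : Q, o (o a) = a)
    -- a Q-category (A, c)
    (A : Type) (c : A → A → Q)
    (c_refl : ∀ a : A, (1 : Q) ≤ c a a)
    (c_comp : ∀ a b b' : A, c a b * c b b' ≤ c a b')
    -- θ is a symmetric left adjoint presheaf on (A, c_s), c_s a b = c a b ⊓ o (c b a)
    (θ : A → Q)
    (θ_act : ∀ a b : A, (c a b ⊓ o (c b a)) * θ b ≤ θ a)
    (θ_counit : ∀ a b : A, θ a * o (θ b) ≤ c a b ⊓ o (c b a))
    (θ_unit : (1 : Q) ≤ ⨆ a, o (θ a) * θ a) :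
    ∀ a : A, θ a = (⨆ b, c a b * θ b) ⊓ o (⨆ b, o (θ b) * c b a) := by
  have le_o : ∀ x y : Q, o x ≤ y → x ≤ o y := fun x y h => by
    have := o_mono _ _ h; rwa [o_o] at this
  intro a
  apply le_antisymm
  · refine le_inf ?_ ?_
    · calc θ a = θ a * 1 := (mul_one _).symm
        _ ≤ θ a * ⨆ b, o (θ b) * θ b := mul_le_mul_right θ_unit _
        _ = ⨆ b, θ a * (o (θ b) * θ b) := Quantale.mul_iSup_distrib
        _ ≤ ⨆ b, c a b * θ b := by
            refine iSup_mono fun b => ?_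
            rw [← mul_assoc]
            exact mul_le_mul_left ((θ_counit a b).trans inf_le_left) _
    · refine le_o _ _ ?_
      calc o (θ a) = 1 * o (θ a) := (one_mul _).symm
        _ ≤ (⨆ b, o (θ b) * θ b) * o (θ a) := mul_le_mul_left θ_unit _
        _ = ⨆ b, (o (θ b) * θ b) * o (θ a) := Quantale.iSup_mul_distrib
        _ ≤ ⨆ b, o (θ b) * c b a := by
            refine iSup_mono fun b => ?_
            rw [mul_assoc]
            exact mul_le_mul_right ((θ_counit b a).trans inf_le_left) _
  · set S := ⨆ b, c a b * θ b with hS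
    set T := o (⨆ b, o (θ b) * c b a) with hT
    have key : ∀ b, (S ⊓ T) * o (θ b) ≤ c a b ⊓ o (c b a) := by
      intro b
      refine le_inf ?_ ?_
      · calc (S ⊓ T) * o (θ b) ≤ S * o (θ b) := mul_le_mul_left inf_le_left _
          _ = ⨆ b', (c a b' * θ b') * o (θ b) := by rw [hS, Quantale.iSup_mul_distrib]
          _ ≤ c a b := by
            refine iSup_le fun b' => ?_
            rw [mul_assoc]
            calc c a b' * (θ b' * o (θ b)) ≤ c a b' * c b' b :=
                  mul_le_mul_right ((θ_counit b' b).trans inf_le_left) _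
              _ ≤ c a b := c_comp a b' b
      · refine le_o _ _ ?_
        calc o ((S ⊓ T) * o (θ b)) = θ b * o (S ⊓ T) := by rw [o_mul, o_o]
          _ ≤ θ b * o T := mul_le_mul_right (o_mono _ _ inf_le_right) _
          _ = θ b * ⨆ b', o (θ b') * c b' a := by rw [hT, o_o]
          _ = ⨆ b', θ b * (o (θ b') * c b' a) := Quantale.mul_iSup_distrib
          _ ≤ c b a := by
            refine iSup_le fun b' => ?_
            rw [← mul_assoc]
            calc (θ b * o (θ b')) * c b' a ≤ c b b' * c b' a :=
                  mul_le_mul_left ((θ_counit b b').trans inf_le_left) _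
              _ ≤ c b a := c_comp b b' a
    calc S ⊓ T = (S ⊓ T) * 1 := (mul_one _).symm
      _ ≤ (S ⊓ T) * ⨆ b, o (θ b) * θ b := mul_le_mul_right θ_unit _
      _ = ⨆ b, (S ⊓ T) * (o (θ b) * θ b) := Quantale.mul_iSup_distrib
      _ ≤ θ a := by
        refine iSup_le fun b => ?_
        rw [← mul_assoc]
        exact (mul_le_mul_left (key b) _).trans (θ_act a b)
end

section
/- Let Q be an involutive quantale and (A, c) a Cauchy complete Q-category, meaning: for every left adjoint presheaf (φ, ψ) on (A, c) there exists a₀ ∈ A with φ a = c a a₀ and ψ a = c a₀ a for all a. Then the symmetrisation (A, c_s), where c_s a b = c a b ⊓ (c b a)ᵒ, is symmetrically complete: for every symmetric left adjoint presheaf θ on (A, c_s) there exists a₀ ∈ A with θ a = c_s a a₀ for all a. (One-object-quantaloid instance of the final part of the paper's Proposition on the comparison functor L.) -/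
/-- One-object-quantaloid instance of the final part of the Proposition on the comparison
functor `L`: if `(A, c)` is a Cauchy complete `Q`-category, then its symmetrisation
`(A, c_s)` with `c_s a b = c a b ⊓ (c b a)ᵒ` is symmetrically complete. -/
theorem symmetrisation_of_cauchyComplete_is_symmetricallyComplete
    {Q : Type} [CompleteLattice Q] [Monoid Q] [IsQuantale Q]
    (o : Q → Q)
    (o_mono : ∀ a b : Q, a ≤ b → o a ≤ o b)
    (o_mul : ∀ a b : Q, o (a * b) = o b * o a)
    (o_o : ∀ a : Q, o (o a) = a)
    -- a Q-category (A, c)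
    (A : Type) (c : A → A → Q)
    (c_refl : ∀ a : A, (1 : Q) ≤ c a a)
    (c_comp : ∀ a b b' : A, c a b * c b b' ≤ c a b')
    -- (A, c) is Cauchy complete: every left adjoint presheaf is representable
    (hcc : ∀ φ ψ : A → Q,
      (∀ a b : A, c a b * φ b ≤ φ a) →
      (∀ a b : A, ψ b * c b a ≤ ψ a) →
      (∀ a b : A, φ a * ψ b ≤ c a b) →
      ((1 : Q) ≤ ⨆ a, ψ a * φ a) →
      ∃ a₀ : A, (∀ a : A, φ a = c a a₀) ∧ (∀ a : A, ψ a = c a₀ a)) :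
    -- (A, c_s) is symmetrically complete:
    -- every symmetric left adjoint presheaf on (A, c_s) is representable
    ∀ θ : A → Q,
      (∀ a b : A, (c a b ⊓ o (c b a)) * θ b ≤ θ a) →
      (∀ a b : A, θ a * o (θ b) ≤ c a b ⊓ o (c b a)) →
      ((1 : Q) ≤ ⨆ a, o (θ a) * θ a) →
      ∃ a₀ : A, ∀ a : A, θ a = c a a₀ ⊓ o (c a₀ a) := by
  intro θ h1 h2 h3
  set φ : A → Q := fun a => ⨆ b, c a b * θ b with hφ
  set ψ : A → Q := fun a => ⨆ b, o (θ b) * c b a with hψ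
  have hθφ : ∀ a, θ a ≤ φ a := by
    intro a
    calc θ a = 1 * θ a := (one_mul _).symm
    _ ≤ c a a * θ a := mul_le_mul_left (c_refl a) _
    _ ≤ φ a := le_iSup (fun b => c a b * θ b) a
  have hθψ : ∀ a, o (θ a) ≤ ψ a := by
    intro a
    calc o (θ a) = o (θ a) * 1 := (mul_one _).symm
    _ ≤ o (θ a) * c a a := mul_le_mul_right (c_refl a) _
    _ ≤ ψ a := le_iSup (fun b => o (θ b) * c b a) a
  have hA1 : ∀ a b : A, c a b * φ b ≤ φ a := by
    intro a b
    rw [hφ]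
    simp only [Quantale.mul_iSup_distrib]
    refine iSup_le fun x => ?_
    refine le_trans ?_ (le_iSup (fun x => c a x * θ x) x)
    rw [← mul_assoc]
    exact mul_le_mul_left (c_comp a b x) _
  have hA2 : ∀ a b : A, ψ b * c b a ≤ ψ a := by
    intro a b
    rw [hψ]
    simp only [Quantale.iSup_mul_distrib]
    refine iSup_le fun x => ?_
    refine le_trans ?_ (le_iSup (fun x => o (θ x) * c x a) x)
    rw [mul_assoc]
    exact mul_le_mul_right (c_comp x b a) _
  have hA3 : ∀ a b : A, φ a * ψ b ≤ c a b := by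
    intro a b
    rw [hφ, hψ]
    simp only [Quantale.iSup_mul_distrib, Quantale.mul_iSup_distrib]
    refine iSup_le fun y => iSup_le fun x => ?_
    have : θ x * o (θ y) ≤ c x y := le_trans (h2 x y) inf_le_left
    calc c a x * θ x * (o (θ y) * c y b)
        = c a x * (θ x * o (θ y)) * c y b := by simp [mul_assoc]
      _ ≤ c a x * c x y * c y b := by
          exact mul_le_mul_left (mul_le_mul_right this _) _
      _ ≤ c a y * c y b := mul_le_mul_left (c_comp a x y) _
      _ ≤ c a b := c_comp a y b
  have hA4 : (1 : Q) ≤ ⨆ a, ψ a * φ a := by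
    refine le_trans h3 (iSup_mono fun a => ?_)
    exact mul_le_mul' (hθψ a) (hθφ a)
  obtain ⟨a₀, hφr, hψr⟩ := hcc φ ψ hA1 hA2 hA3 hA4
  refine ⟨a₀, fun a => le_antisymm ?_ ?_⟩
  · refine le_inf (le_trans (hθφ a) (hφr a).le) ?_
    have := le_trans (hθψ a) (hψr a).le
    calc θ a = o (o (θ a)) := (o_o _).symm
    _ ≤ o (c a₀ a) := o_mono _ _ this
  · -- c_s a a₀ ≤ θ a
    have key : ∀ b, (c a a₀ ⊓ o (c a₀ a)) * (o (θ b) * θ b) ≤ θ a := by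
      intro b
      have hb1 : o (θ b) ≤ c a₀ b := le_trans (hθψ b) (hψr b).le
      have hb2 : θ b ≤ c b a₀ := le_trans (hθφ b) (hφr b).le
      have step : (c a a₀ ⊓ o (c a₀ a)) * o (θ b) ≤ c a b ⊓ o (c b a) := by
        refine le_inf ?_ ?_
        · calc (c a a₀ ⊓ o (c a₀ a)) * o (θ b) ≤ c a a₀ * c a₀ b :=
            mul_le_mul' inf_le_left hb1
          _ ≤ c a b := c_comp a a₀ b
        · calc (c a a₀ ⊓ o (c a₀ a)) * o (θ b) ≤ o (c a₀ a) * o (c b a₀) :=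
            mul_le_mul' inf_le_right (o_mono _ _ hb2)
          _ = o (c b a₀ * c a₀ a) := (o_mul _ _).symm
          _ ≤ o (c b a) := o_mono _ _ (c_comp b a₀ a)
      calc (c a a₀ ⊓ o (c a₀ a)) * (o (θ b) * θ b)
          = ((c a a₀ ⊓ o (c a₀ a)) * o (θ b)) * θ b := (mul_assoc _ _ _).symm
        _ ≤ (c a b ⊓ o (c b a)) * θ b := mul_le_mul_left step _
        _ ≤ θ a := h1 a b
    calc c a a₀ ⊓ o (c a₀ a) = (c a a₀ ⊓ o (c a₀ a)) * 1 := (mul_one _).symm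
      _ ≤ (c a a₀ ⊓ o (c a₀ a)) * ⨆ b, o (θ b) * θ b := mul_le_mul_right h3 _
      _ = ⨆ b, (c a a₀ ⊓ o (c a₀ a)) * (o (θ b) * θ b) := Quantale.mul_iSup_distrib
      _ ≤ θ a := iSup_le key
end

section
/- Let Q be an involutive quantale and (A, c) a symmetric Q-category. On symmetric left adjoint presheaves φ, ψ on (A, c), define h(ψ, φ) := ⨆ a, (ψ a)ᵒ * φ a. Then h makes the collection of symmetric left adjoint presheaves into a symmetric Q-category: 1 ≤ h(φ, φ); h(χ, ψ) * h(ψ, φ) ≤ h(χ, φ) for all symmetric left adjoint presheaves φ, ψ, χ; and h(ψ, φ) = (h(φ, ψ))ᵒ. (This says the symmetric completion A_sc of a symmetric Q-category is again a symmetric Q-category, in the one-object-quantaloid case.) -/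
/-- A symmetric left adjoint presheaf on a (symmetric) `Q`-category `(A, c)`,
with respect to an involution `o` on `Q`. -/
structure SymLeftAdjPresheaf (Q : Type) [CompleteLattice Q] [Monoid Q]
    (o : Q → Q) {A : Type} (c : A → A → Q) where
  θ : A → Q
  act : ∀ a b : A, c a b * θ b ≤ θ a
  counit : ∀ a b : A, θ a * o (θ b) ≤ c a b
  unit : (1 : Q) ≤ ⨆ a, o (θ a) * θ a

/-- The symmetric completion of a symmetric `Q`-category is again a symmetric
`Q`-category (one-object-quantaloid case): on symmetric left adjoint presheaves,
`h(ψ, φ) = ⨆ a, (ψ a)ᵒ * φ a` satisfies `1 ≤ h(φ, φ)`,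
`h(χ, ψ) * h(ψ, φ) ≤ h(χ, φ)`, and `h(ψ, φ) = (h(φ, ψ))ᵒ`. -/
theorem symmetric_completion_is_symmetric_category
    {Q : Type} [CompleteLattice Q] [Monoid Q] [IsQuantale Q]
    (o : Q → Q)
    (o_mono : ∀ a b : Q, a ≤ b → o a ≤ o b)
    (o_mul : ∀ a b : Q, o (a * b) = o b * o a)
    (o_o : ∀ a : Q, o (o a) = a)
    -- a symmetric Q-category (A, c)
    (A : Type) (c : A → A → Q)
    (c_refl : ∀ a : A, (1 : Q) ≤ c a a)
    (c_comp : ∀ a b b' : A, c a b * c b b' ≤ c a b')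
    (c_symm : ∀ a b : A, c a b = o (c b a)) :
    (∀ φ : SymLeftAdjPresheaf Q o c, (1 : Q) ≤ ⨆ a, o (φ.θ a) * φ.θ a) ∧
    (∀ χ ψ φ : SymLeftAdjPresheaf Q o c,
      (⨆ a, o (χ.θ a) * ψ.θ a) * (⨆ a, o (ψ.θ a) * φ.θ a) ≤ ⨆ a, o (χ.θ a) * φ.θ a) ∧
    (∀ ψ φ : SymLeftAdjPresheaf Q o c,
      (⨆ a, o (ψ.θ a) * φ.θ a) = o (⨆ a, o (φ.θ a) * ψ.θ a)) := by
  have o_sup : ∀ {ι : Type} (f : ι → Q), o (⨆ i, f i) = ⨆ i, o (f i) := by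
    intro ι f
    apply le_antisymm
    · have : (⨆ i, f i) ≤ o (⨆ i, o (f i)) := by
        apply iSup_le; intro i
        have := o_mono _ _ (le_iSup (fun i => o (f i)) i)
        rw [o_o] at this; exact this
      have := o_mono _ _ this
      rwa [o_o] at this
    · apply iSup_le; intro i; exact o_mono _ _ (le_iSup f i)
  refine ⟨fun φ => φ.unit, ?_, ?_⟩
  · intro χ ψ φ
    rw [Quantale.iSup_mul_distrib]
    apply iSup_le; intro a
    rw [Quantale.mul_iSup_distrib]
    apply iSup_le; intro b
    calc o (χ.θ a) * ψ.θ a * (o (ψ.θ b) * φ.θ b)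
        = o (χ.θ a) * ((ψ.θ a * o (ψ.θ b)) * φ.θ b) := by
          rw [mul_assoc]; rw [← mul_assoc (ψ.θ a)]
      _ ≤ o (χ.θ a) * (c a b * φ.θ b) := by
          apply mul_le_mul_right
          exact mul_le_mul_left (ψ.counit a b) _
      _ ≤ o (χ.θ a) * φ.θ a := mul_le_mul_right (φ.act a b) _
      _ ≤ ⨆ a, o (χ.θ a) * φ.θ a := le_iSup (fun a => o (χ.θ a) * φ.θ a) a
  · intro ψ φ
    rw [o_sup]
    congr 1; funext a
    rw [o_mul, o_o]
end

section
/- Let (X, d) be a symmetric generalized metric space: d : X → X → ℝ≥0∞ with d x x = 0, d x z ≤ d x y + d y z and d x y = d y x for all x, y, z. Suppose φ, ψ : X → ℝ≥0∞ form an adjoint pair of presheaves, i.e.: φ a ≤ d a b + φ b and ψ a ≤ ψ b + d b a for all a, b; d a b ≤ φ a + ψ b for all a, b; and ⨅ a, (ψ a + φ a) = 0. Then φ = ψ. (Instance, for Lawvere's quantale [0,∞], of the result that every left adjoint presheaf on a symmetric enriched category over a Cauchy-bilateral quantaloid is symmetric; it implies the Cauchy completion of a symmetric generalized metric space is symmetric.)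 -/
open scoped ENNReal

/-- Every left adjoint presheaf on a symmetric generalized metric space is symmetric:
if `(X, d)` is a symmetric generalized metric space and `(φ, ψ)` is an adjoint pair of
presheaves on it, then `φ = ψ`. -/
theorem leftAdjoint_presheaf_on_symmetric_gms_is_symmetric
    {X : Type} (d : X → X → ℝ≥0∞)
    (d_refl : ∀ x : X, d x x = 0)
    (d_triangle : ∀ x y z : X, d x z ≤ d x y + d y z)
    (d_symm : ∀ x y : X, d x y = d y x)
    (φ ψ : X → ℝ≥0∞)
    (act₁ : ∀ a b : X, φ a ≤ d a b + φ b)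
    (act₂ : ∀ a b : X, ψ a ≤ ψ b + d b a)
    (counit : ∀ a b : X, d a b ≤ φ a + ψ b)
    (unit : ⨅ a, (ψ a + φ a) = 0) :
    φ = ψ := by
  have hne : Nonempty X := by
    rcases isEmpty_or_nonempty X with h | h
    · simp [iInf_of_isEmpty] at unit
    · exact h
  have key : ∀ (u c : ℝ≥0∞), (∀ a : X, u ≤ c + 2 * (ψ a + φ a)) → u ≤ c := by
    intro u c h
    have : u ≤ ⨅ a : X, (c + 2 * (ψ a + φ a)) := le_iInf h
    calc u ≤ ⨅ a : X, (c + 2 * (ψ a + φ a)) := this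
      _ = c + 2 * ⨅ a : X, (ψ a + φ a) := by
          rw [← ENNReal.add_iInf, ← ENNReal.mul_iInf (fun h => absurd h (by norm_num))]
      _ = c := by rw [unit]; simp
  funext x
  refine le_antisymm ?_ ?_
  · -- φ x ≤ ψ x
    apply key
    intro a
    calc φ x ≤ d x a + φ a := act₁ x a
      _ = d a x + φ a := by rw [d_symm]
      _ ≤ (φ a + ψ x) + φ a := add_le_add_left (counit a x) _
      _ = ψ x + (φ a + φ a) := by ring
      _ ≤ ψ x + ((ψ a + φ a) + (ψ a + φ a)) := by gcongr <;> exact le_add_self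
      _ = ψ x + 2 * (ψ a + φ a) := by ring
  · apply key
    intro a
    calc ψ x ≤ ψ a + d a x := act₂ x a
      _ = ψ a + d x a := by rw [d_symm]
      _ ≤ ψ a + (φ x + ψ a) := add_le_add_right (counit x a) _
      _ = φ x + (ψ a + ψ a) := by ring
      _ ≤ φ x + ((ψ a + φ a) + (ψ a + φ a)) := by gcongr <;> exact le_self_add
      _ = φ x + 2 * (ψ a + φ a) := by ring
end

section
/- The quantale of subsets of the cyclic group ℤ/3 (with pointwise addition of sets and trivial involution) is not Cauchy-bilateral: the one-element family f = {1}, g = {2} of subsets of ZMod 3 satisfies f + g + f ⊆ f, g + f + g ⊆ g, and (0 : ZMod 3) ∈ g + f, yet 0 ∉ (g ∩ f) + (g ∩ f) (indeed g ∩ f = ∅). (This is Betti and Walters' counterexample showing the Cauchy completion of a symmetric enriched category need not be symmetric.) -/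
open scoped Pointwise

/-- Betti and Walters' counterexample: the quantale of subsets of `ℤ/3` (with pointwise
addition and trivial involution) is not Cauchy-bilateral. The one-element family
`f = {1}`, `g = {2}` satisfies `f + g + f ⊆ f`, `g + f + g ⊆ g` and `0 ∈ g + f`, yet
`0 ∉ (g ∩ f) + (g ∩ f)`; indeed `g ∩ f = ∅`. -/
theorem zmod3_subsets_not_cauchyBilateral :
    let f : Set (ZMod 3) := {1}
    let g : Set (ZMod 3) := {2}
    f + g + f ⊆ f ∧ g + f + g ⊆ g ∧ (0 : ZMod 3) ∈ g + f ∧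
      (0 : ZMod 3) ∉ (g ∩ f) + (g ∩ f) ∧ g ∩ f = (∅ : Set (ZMod 3)) := by
  intro f g
  have hgf : g ∩ f = (∅ : Set (ZMod 3)) := by
    ext x; simp only [Set.mem_inter_iff, Set.mem_singleton_iff, Set.mem_empty_iff_false,
      iff_false, not_and]
    intro h; subst h; decide
  refine ⟨?_, ?_, ?_, ?_, hgf⟩
  · simp only [f, g, Set.singleton_add_singleton, Set.singleton_subset_singleton]; decide
  · simp only [f, g, Set.singleton_add_singleton, Set.singleton_subset_singleton]; decide
  · simp only [f, g, Set.singleton_add_singleton]; decide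
  · rw [hgf]; simp
end

section
/- Let Q be an involutive quantale whose underlying complete lattice is a frame (binary infima distribute over arbitrary suprema) and which satisfies the modular law: a*b ⊓ c ≤ a*(b ⊓ (aᵒ*c)) for all a, b, c. Then Q is strongly Cauchy-bilateral: for every family (f i, g i) of elements of Q with 1 ≤ ⨆ i, g i * f i, one has 1 ≤ ⨆ i, ((f i)ᵒ ⊓ g i) * (f i ⊓ (g i)ᵒ). (One-object case of the result that every locally localic and modular quantaloid is strongly Cauchy-bilateral.) -/
/-- One-object case of "every locally localic and modular quantaloid is strongly
Cauchy-bilateral": an involutive quantale whose underlying lattice is a frame and which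
satisfies the modular law `a*b ⊓ c ≤ a*(b ⊓ (aᵒ*c))` is strongly Cauchy-bilateral. -/
theorem localic_modular_quantale_strongly_cauchyBilateral
    {Q : Type} [Order.Frame Q] [Monoid Q] [IsQuantale Q]
    (o : Q → Q)
    (o_mono : ∀ a b : Q, a ≤ b → o a ≤ o b)
    (o_mul : ∀ a b : Q, o (a * b) = o b * o a)
    (o_o : ∀ a : Q, o (o a) = a)
    (modular : ∀ a b c : Q, a * b ⊓ c ≤ a * (b ⊓ o a * c))
    (ι : Type) (f g : ι → Q)
    (h : (1 : Q) ≤ ⨆ i, g i * f i) :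
    (1 : Q) ≤ ⨆ i, (o (f i) ⊓ g i) * (f i ⊓ o (g i)) := by
  -- o 1 = 1
  have o1 : o (1 : Q) = 1 := by
    have h1 : ∀ a : Q, o a = o a * o 1 := by
      intro a; conv_lhs => rw [← one_mul a, o_mul]
    have := h1 (o 1)
    rw [o_o, one_mul] at this
    exact this.symm
  -- o preserves binary meets
  have o_inf : ∀ a b : Q, o (a ⊓ b) = o a ⊓ o b := by
    intro a b
    apply le_antisymm
    · exact le_inf (o_mono _ _ inf_le_left) (o_mono _ _ inf_le_right)
    · have : o (o a ⊓ o b) ≤ a ⊓ b := by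
        refine le_inf ?_ ?_
        · have := o_mono _ _ (inf_le_left (a := o a) (b := o b)); rwa [o_o] at this
        · have := o_mono _ _ (inf_le_right (a := o a) (b := o b)); rwa [o_o] at this
      have := o_mono _ _ this
      rwa [o_o] at this
  -- dual modular law
  have dual_mod : ∀ a b c : Q, a * b ⊓ c ≤ (a ⊓ c * o b) * b := by
    intro a b c
    have key := modular (o b) (o a) (o c)
    rw [o_o] at key
    have : o (a * b ⊓ c) ≤ o ((a ⊓ c * o b) * b) := by
      rw [o_inf, o_mul]
      rw [o_mul, o_inf, o_mul, o_o]
      exact key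
    have := o_mono _ _ this
    rwa [o_o, o_o] at this
  -- step 1: 1 ≤ ⨆ i, g i * (f i ⊓ o (g i))
  have step1 : (1 : Q) ≤ ⨆ i, g i * (f i ⊓ o (g i)) := by
    have : (1 : Q) ≤ ⨆ i, (g i * f i ⊓ 1) := by
      have := inf_le_inf_left (1 : Q) h
      rw [inf_idem] at this
      refine this.trans ?_
      rw [inf_iSup_eq]
      exact iSup_mono fun i => by rw [inf_comm]
    refine this.trans (iSup_mono fun i => ?_)
    have := modular (g i) (f i) 1
    rwa [mul_one] at this
  -- step 2
  have : (1 : Q) ≤ ⨆ i, (g i * (f i ⊓ o (g i)) ⊓ 1) := by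
    have := inf_le_inf_left (1 : Q) step1
    rw [inf_idem] at this
    refine this.trans ?_
    rw [inf_iSup_eq]
    exact iSup_mono fun i => by rw [inf_comm]
  refine this.trans (iSup_mono fun i => ?_)
  have := dual_mod (g i) (f i ⊓ o (g i)) 1
  rw [one_mul, o_inf, o_o] at this
  refine this.trans ?_
  apply mul_le_mul_left
  rw [inf_comm (o (f i)) (g i), ← inf_assoc, inf_idem]
end
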